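/- arXiv:1206.3711 — 6 statements merged into one kernel-verified Lean document; each statement's English description precedes it below -/
import Mathlib

section
/- Let (P_n) be defined by P_0(x) = exp(-x) and P_{n+1}(x) = exp(-x + ∫_0^x P_n(y) dy) for x ≥ 0. Then for every n ≥ 0 and every x ≥ 0, 0 ≤ 1 − P_n(x) ≤ x^{n+1}/(n+1)!. Consequently, for every fixed x ≥ 0, P_n(x) → 1 as n → ∞. -/
noncomputable def cascadeQ : ℕ → ℝ → ℝ
  | 0 => fun x => Real.exp (-x)
  | (n+1) => fun x => Real.exp (-x + ∫ y in (0:ℝ)..x, cascadeQ n y)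

lemma cascadeQ_cont (n : ℕ) : Continuous (cascadeQ n) := by
  induction n with
  | zero => exact Real.continuous_exp.comp continuous_neg
  | succ n ih =>
    have hint : Continuous fun x : ℝ => ∫ y in (0:ℝ)..x, cascadeQ n y :=
      intervalIntegral.continuous_primitive (fun a b => ih.intervalIntegrable a b) 0
    exact Real.continuous_exp.comp (continuous_neg.add hint)

lemma cascadeQ_pos (n : ℕ) (x : ℝ) : 0 < cascadeQ n x := by
  cases n <;> exact Real.exp_pos _

lemma cascadeQ_bound (n : ℕ) : ∀ x : ℝ, 0 ≤ x →
    0 ≤ 1 - cascadeQ n x ∧ 1 - cascadeQ n x ≤ x ^ (n + 1) / (Nat.factorial (n + 1) : ℝ) := by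
  induction n with
  | zero =>
    intro x hx
    constructor
    · have : Real.exp (-x) ≤ 1 := Real.exp_le_one_iff.2 (by linarith)
      simp only [cascadeQ]; linarith
    · have h := Real.add_one_le_exp (-x)
      simp [cascadeQ, Nat.factorial]
      linarith
  | succ n ih =>
    intro x hx
    set I := ∫ y in (0:ℝ)..x, cascadeQ n y with hI
    have hQx : cascadeQ (n+1) x = Real.exp (-x + I) := rfl
    have hintg : IntervalIntegrable (cascadeQ n) MeasureTheory.volume 0 x :=
      (cascadeQ_cont n).intervalIntegrable 0 x
    have hIle : I ≤ x := by
      have : I ≤ ∫ _ in (0:ℝ)..x, (1:ℝ) := by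
        apply intervalIntegral.integral_mono_on hx hintg (intervalIntegrable_const)
        intro y hy
        have := (ih y hy.1).1
        linarith
      simpa using this
    have h2 : x - I ≤ x ^ (n + 2) / (Nat.factorial (n + 2) : ℝ) := by
      have hsub : x - I = ∫ y in (0:ℝ)..x, (1 - cascadeQ n y) := by
        rw [intervalIntegral.integral_sub intervalIntegrable_const hintg]
        simp [hI]
      have hmono : (∫ y in (0:ℝ)..x, (1 - cascadeQ n y)) ≤
          ∫ y in (0:ℝ)..x, y ^ (n + 1) / (Nat.factorial (n + 1) : ℝ) := by
        apply intervalIntegral.integral_mono_on hx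
          (intervalIntegrable_const.sub hintg)
          (((continuous_pow (n+1)).div_const _).intervalIntegrable 0 x)
        intro y hy
        exact (ih y hy.1).2
      have hcalc : (∫ y in (0:ℝ)..x, y ^ (n + 1) / (Nat.factorial (n + 1) : ℝ)) =
          x ^ (n + 2) / (Nat.factorial (n + 2) : ℝ) := by
        rw [intervalIntegral.integral_div, integral_pow]
        have hfact : (Nat.factorial (n + 2) : ℝ) = (n + 2) * (Nat.factorial (n + 1) : ℝ) := by
          rw [Nat.factorial_succ]; push_cast; ring
        rw [hfact, div_div]
        push_cast
        ring_nf
      linarith [hsub ▸ hmono, hcalc ▸ hmono, hsub, hcalc]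
    constructor
    · have : Real.exp (-x + I) ≤ 1 := Real.exp_le_one_iff.2 (by linarith)
      rw [hQx]; linarith
    · have h := Real.add_one_le_exp (-x + I)
      rw [hQx]
      linarith

theorem cascade_P_small_x_bound_and_limit (P : ℕ → ℝ → ℝ)
    (hP0 : ∀ x : ℝ, 0 ≤ x → P 0 x = Real.exp (-x))
    (hPrec : ∀ n : ℕ, ∀ x : ℝ, 0 ≤ x →
      P (n + 1) x = Real.exp (-x + ∫ y in (0:ℝ)..x, P n y)) :
    (∀ n : ℕ, ∀ x : ℝ, 0 ≤ x →
      0 ≤ 1 - P n x ∧ 1 - P n x ≤ x ^ (n + 1) / (Nat.factorial (n + 1) : ℝ)) ∧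
    (∀ x : ℝ, 0 ≤ x →
      Filter.Tendsto (fun n : ℕ => P n x) Filter.atTop (nhds 1)) := by
  have hPQ : ∀ n : ℕ, ∀ x : ℝ, 0 ≤ x → P n x = cascadeQ n x := by
    intro n
    induction n with
    | zero => intro x hx; rw [hP0 x hx]; rfl
    | succ n ih =>
      intro x hx
      rw [hPrec n x hx]
      show _ = Real.exp (-x + ∫ y in (0:ℝ)..x, cascadeQ n y)
      have heq : (∫ y in (0:ℝ)..x, P n y) = ∫ y in (0:ℝ)..x, cascadeQ n y := by
        apply intervalIntegral.integral_congr
        intro y hy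
        rw [Set.uIcc_of_le hx] at hy
        exact ih y hy.1
      rw [heq]
  have hbound : ∀ n : ℕ, ∀ x : ℝ, 0 ≤ x →
      0 ≤ 1 - P n x ∧ 1 - P n x ≤ x ^ (n + 1) / (Nat.factorial (n + 1) : ℝ) := by
    intro n x hx
    rw [hPQ n x hx]
    exact cascadeQ_bound n x hx
  refine ⟨hbound, fun x hx => ?_⟩
  have htend : Filter.Tendsto (fun n : ℕ => x ^ (n + 1) / (Nat.factorial (n + 1) : ℝ))
      Filter.atTop (nhds 0) :=
    (FloorSemiring.tendsto_pow_div_factorial_atTop x).comp (Filter.tendsto_add_atTop_nat 1)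
  have hlow : Filter.Tendsto (fun n : ℕ => 1 - x ^ (n + 1) / (Nat.factorial (n + 1) : ℝ))
      Filter.atTop (nhds 1) := by
    have := (tendsto_const_nhds (x := (1:ℝ)) (f := Filter.atTop (α := ℕ))).sub htend
    simpa using this
  apply tendsto_of_tendsto_of_tendsto_of_le_of_le hlow tendsto_const_nhds
  · intro n; have := (hbound n x hx).2; dsimp; linarith
  · intro n; have := (hbound n x hx).1; dsimp; linarith
end

section
/- Let (P_n) be defined by P_0(x) = exp(-x) and P_{n+1}(x) = exp(-x + ∫_0^x P_n(y) dy) for x ≥ 0. Then for every n ≥ 0, the limit lim_{x → 0⁺} (1 − P_n(x)) / x^{n+1} exists and equals 1/(n+1)!. -/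
open Set Filter intervalIntegral

private lemma cascade_exp_upper (t : ℝ) : 1 - Real.exp (-t) ≤ t := by
  have := Real.add_one_le_exp (-t); linarith

private lemma cascade_exp_lower (t : ℝ) (h0 : 0 ≤ t) (h1 : t ≤ 1) :
    Real.exp (-t) ≤ 1 - t + t ^ 2 := by
  have habs : |(-t)| ≤ 1 := by rw [abs_neg, abs_of_nonneg h0]; exact h1
  have hb := Real.exp_bound habs (n := 3) (by norm_num)
  rw [abs_neg, abs_of_nonneg h0] at hb
  have hs : ∑ m ∈ Finset.range 3, (-t) ^ m / (Nat.factorial m : ℝ) = 1 - t + t ^ 2 / 2 := by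
    simp [Finset.sum_range_succ, Nat.factorial]
    ring
  rw [hs] at hb
  have h2 := (abs_sub_le_iff.1 hb).1
  have ht3 : t ^ 3 ≤ t ^ 2 := pow_le_pow_of_le_one h0 h1 (by norm_num)
  norm_num [Nat.factorial] at h2
  nlinarith

theorem cascade_P_leading_order (P : ℕ → ℝ → ℝ)
    (hP0 : ∀ x : ℝ, 0 ≤ x → P 0 x = Real.exp (-x))
    (hPrec : ∀ n : ℕ, ∀ x : ℝ, 0 ≤ x →
      P (n + 1) x = Real.exp (-x + ∫ y in (0:ℝ)..x, P n y)) :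
    ∀ n : ℕ, Filter.Tendsto (fun x : ℝ => (1 - P n x) / x ^ (n + 1))
      (nhdsWithin 0 (Set.Ioi 0)) (nhds (1 / (Nat.factorial (n + 1) : ℝ))) := by
  have key : ∀ n : ℕ, ContinuousOn (P n) (Icc 0 1) ∧
      ∀ x ∈ Icc (0:ℝ) 1, P n x ≤ 1 ∧
        1 - P n x ≤ x ^ (n + 1) / (Nat.factorial (n + 1) : ℝ) ∧
        x ^ (n + 1) / (Nat.factorial (n + 1) : ℝ) * (1 - (n + 1) * x) ≤ 1 - P n x := by
    intro n
    induction n with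
    | zero =>
      constructor
      · exact (Real.continuous_exp.comp continuous_neg).continuousOn.congr
          fun x hx => hP0 x hx.1
      · intro x hx
        rw [hP0 x hx.1]
        have h1 : 1 - Real.exp (-x) ≤ x := cascade_exp_upper x
        have h2 : Real.exp (-x) ≤ 1 - x + x ^ 2 := cascade_exp_lower x hx.1 hx.2
        have h3 : Real.exp (-x) ≤ 1 := Real.exp_le_one_iff.2 (by linarith [hx.1])
        refine ⟨h3, ?_, ?_⟩
        · simp [Nat.factorial]; linarith
        · simp [Nat.factorial]; nlinarith
    | succ n ih =>
      obtain ⟨hc, hbnd⟩ := ih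
      -- integrability of P n on [0,x] for x ∈ [0,1]
      have hint : ∀ x ∈ Icc (0:ℝ) 1, IntervalIntegrable (P n) MeasureTheory.volume 0 x := by
        intro x hx
        exact (hc.mono (by rw [uIcc_of_le hx.1]; exact Icc_subset_Icc le_rfl hx.2)).intervalIntegrable
      -- formula via g x = ∫ (1 - P n)
      have hPx : ∀ x ∈ Icc (0:ℝ) 1,
          P (n + 1) x = Real.exp (-(∫ y in (0:ℝ)..x, (1 - P n y))) := by
        intro x hx
        rw [hPrec n x hx.1]
        congr 1
        rw [intervalIntegral.integral_sub intervalIntegrable_const (hint x hx)]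
        simp
        ring
      have hfacpos : (0:ℝ) < (Nat.factorial (n + 1) : ℝ) := by positivity
      have hfacsucc : ((Nat.factorial (n + 2) : ℝ)) = (n + 2) * (Nat.factorial (n + 1) : ℝ) := by
        rw [show n + 2 = (n + 1) + 1 from rfl, Nat.factorial_succ]
        push_cast; ring
      -- bounds on g
      have hg : ∀ x ∈ Icc (0:ℝ) 1,
          0 ≤ (∫ y in (0:ℝ)..x, (1 - P n y)) ∧
          (∫ y in (0:ℝ)..x, (1 - P n y)) ≤ x ^ (n + 2) / (Nat.factorial (n + 2) : ℝ) ∧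
          x ^ (n + 2) / (Nat.factorial (n + 2) : ℝ) * (1 - (n + 1) * x) ≤
            (∫ y in (0:ℝ)..x, (1 - P n y)) := by
        intro x hx
        have hsub : ∀ y ∈ Icc (0:ℝ) x, y ∈ Icc (0:ℝ) 1 :=
          fun y hy => ⟨hy.1, hy.2.trans hx.2⟩
        have hI1 : IntervalIntegrable (fun y => 1 - P n y) MeasureTheory.volume 0 x :=
          intervalIntegrable_const.sub (hint x hx)
        have hI2 : IntervalIntegrable (fun y : ℝ => y ^ (n + 1) / (Nat.factorial (n + 1) : ℝ))
            MeasureTheory.volume 0 x := (by fun_prop : Continuous _).intervalIntegrable 0 x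
        have hI3 : IntervalIntegrable
            (fun y : ℝ => y ^ (n + 1) / (Nat.factorial (n + 1) : ℝ) * (1 - (n + 1) * y))
            MeasureTheory.volume 0 x := (by fun_prop : Continuous _).intervalIntegrable 0 x
        refine ⟨?_, ?_, ?_⟩
        · exact intervalIntegral.integral_nonneg hx.1
            fun y hy => by linarith [(hbnd y (hsub y hy)).1]
        · have hmono := intervalIntegral.integral_mono_on hx.1 hI1 hI2
            fun y hy => (hbnd y (hsub y hy)).2.1
          have hcomp : (∫ y in (0:ℝ)..x, y ^ (n + 1) / (Nat.factorial (n + 1) : ℝ)) =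
              x ^ (n + 2) / (Nat.factorial (n + 2) : ℝ) := by
            rw [intervalIntegral.integral_div, integral_pow, hfacsucc]
            rw [zero_pow (by omega : n + 2 ≠ 0), sub_zero, div_div]
            push_cast
            ring_nf
          linarith
        · have hmono := intervalIntegral.integral_mono_on hx.1 hI3 hI1
            fun y hy => (hbnd y (hsub y hy)).2.2
          have hcomp : (∫ y in (0:ℝ)..x,
              y ^ (n + 1) / (Nat.factorial (n + 1) : ℝ) * (1 - (n + 1) * y)) =
              x ^ (n + 2) / ((n + 2) * (Nat.factorial (n + 1) : ℝ)) -
              (n + 1) * x ^ (n + 3) / ((n + 3) * (Nat.factorial (n + 1) : ℝ)) := by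
            have heq : (fun y : ℝ => y ^ (n + 1) / (Nat.factorial (n + 1) : ℝ) * (1 - (n + 1) * y))
                = fun y : ℝ => y ^ (n + 1) / (Nat.factorial (n + 1) : ℝ) -
                  (n + 1) * (y ^ (n + 2)) / (Nat.factorial (n + 1) : ℝ) := by
              funext y; field_simp; ring
            rw [heq, intervalIntegral.integral_sub
              ((by fun_prop : Continuous _).intervalIntegrable 0 x)
              ((by fun_prop : Continuous _).intervalIntegrable 0 x)]
            rw [intervalIntegral.integral_div, integral_pow]
            have : (∫ y in (0:ℝ)..x, (n + 1 : ℝ) * y ^ (n + 2) / (Nat.factorial (n + 1) : ℝ))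
                = (n + 1 : ℝ) / (Nat.factorial (n + 1) : ℝ) * ∫ y in (0:ℝ)..x, y ^ (n + 2) := by
              rw [← intervalIntegral.integral_const_mul]
              congr 1; funext y; ring
            rw [this, integral_pow]
            push_cast
            field_simp
            ring
          rw [hcomp] at hmono
          have hx3 : (0:ℝ) ≤ x ^ (n + 3) := pow_nonneg hx.1 _
          have h23 : (n + 1 : ℝ) * x ^ (n + 3) / ((n + 3) * (Nat.factorial (n + 1) : ℝ)) ≤
              (n + 1 : ℝ) * x ^ (n + 3) / ((n + 2) * (Nat.factorial (n + 1) : ℝ)) := by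
            apply div_le_div_of_nonneg_left (by positivity) (by positivity)
            nlinarith
          have hrw : x ^ (n + 2) / (Nat.factorial (n + 2) : ℝ) * (1 - (n + 1) * x) =
              x ^ (n + 2) / ((n + 2) * (Nat.factorial (n + 1) : ℝ)) -
              (n + 1) * x ^ (n + 3) / ((n + 2) * (Nat.factorial (n + 1) : ℝ)) := by
            rw [hfacsucc]
            field_simp
            ring
          linarith
      constructor
      · -- continuity of P (n+1) on Icc 0 1
        have hprim : ContinuousOn (fun x => ∫ y in (0:ℝ)..x, P n y) (Icc 0 1) := by
          have := intervalIntegral.continuousOn_primitive_interval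
            (a := 0) (b := 1) (μ := MeasureTheory.volume) (f := P n)
            (by rw [uIcc_of_le zero_le_one]; exact hc.integrableOn_Icc)
          rwa [uIcc_of_le zero_le_one] at this
        exact (Real.continuous_exp.comp_continuousOn
          ((continuous_neg.continuousOn.add hprim))).congr
          fun x hx => by rw [hPrec n x hx.1]; rfl
      · intro x hx
        obtain ⟨hg0, hgu, hgl⟩ := hg x hx
        set g := ∫ y in (0:ℝ)..x, (1 - P n y) with hgdef
        set A := x ^ (n + 2) / (Nat.factorial (n + 2) : ℝ) with hAdef
        rw [hPx x hx]
        have hA0 : 0 ≤ A := by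
          rw [hAdef]
          exact div_nonneg (pow_nonneg hx.1 _) (Nat.cast_nonneg _)
        have hAx : A ≤ x / 2 := by
          rw [hAdef]
          have h1 : x ^ (n + 2) ≤ x := by
            calc x ^ (n + 2) ≤ x ^ 1 := pow_le_pow_of_le_one hx.1 hx.2 (by omega)
            _ = x := pow_one x
          have h2 : (2:ℝ) ≤ (Nat.factorial (n + 2) : ℝ) := by
            have := Nat.self_le_factorial (n + 2)
            exact_mod_cast le_trans (by omega) this
          exact div_le_div₀ hx.1 h1 two_pos h2
        have hgx : g ≤ x / 2 := hgu.trans hAx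
        have hg1 : g ≤ 1 := hgx.trans (by linarith [hx.2])
        have hexp : Real.exp (-g) ≤ 1 - g + g ^ 2 := cascade_exp_lower g hg0 hg1
        have hup : 1 - Real.exp (-g) ≤ g := cascade_exp_upper g
        have hsq : g ^ 2 ≤ A * (x / 2) := by
          have : g * g ≤ A * (x / 2) :=
            mul_le_mul hgu hgx hg0 hA0
          nlinarith
        refine ⟨Real.exp_le_one_iff.2 (neg_nonpos.2 hg0), ?_, ?_⟩
        · push_cast
          calc 1 - Real.exp (-g) ≤ g := hup
          _ ≤ A := hgu
          _ = x ^ (n + 1 + 1) / (Nat.factorial (n + 1 + 1) : ℝ) := by norm_num [hAdef]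
        · have hAx0 : 0 ≤ A * x := mul_nonneg hA0 hx.1
          have hgoal : A * (1 - ((n:ℝ) + 1 + 1) * x) ≤ 1 - Real.exp (-g) := by
            nlinarith
          calc x ^ (n + 1 + 1) / (Nat.factorial (n + 1 + 1) : ℝ) * (1 - (↑(n + 1) + 1) * x)
              = A * (1 - ((n:ℝ) + 1 + 1) * x) := by push_cast [hAdef]; norm_num
          _ ≤ 1 - Real.exp (-g) := hgoal
  -- final squeeze argument
  intro n
  obtain ⟨-, hb⟩ := key n
  have hfacpos : (0:ℝ) < (Nat.factorial (n + 1) : ℝ) := by positivity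
  have hmem : Set.Ioo (0:ℝ) 1 ∈ nhdsWithin (0:ℝ) (Set.Ioi 0) :=
    Ioo_mem_nhdsGT_of_mem (by norm_num : (0:ℝ) ∈ Set.Ico 0 1)
  have hlow : ∀ᶠ x in nhdsWithin (0:ℝ) (Set.Ioi 0),
      (1 - ((n:ℝ) + 1) * x) / (Nat.factorial (n + 1) : ℝ) ≤ (1 - P n x) / x ^ (n + 1) := by
    filter_upwards [hmem] with x hx
    have hxp : (0:ℝ) < x ^ (n + 1) := pow_pos hx.1 _
    rw [le_div_iff₀ hxp]
    have := (hb x ⟨hx.1.le, hx.2.le⟩).2.2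
    calc (1 - ((n:ℝ) + 1) * x) / (Nat.factorial (n + 1) : ℝ) * x ^ (n + 1)
        = x ^ (n + 1) / (Nat.factorial (n + 1) : ℝ) * (1 - ((n:ℝ) + 1) * x) := by ring
    _ ≤ 1 - P n x := this
  have hup : ∀ᶠ x in nhdsWithin (0:ℝ) (Set.Ioi 0),
      (1 - P n x) / x ^ (n + 1) ≤ 1 / (Nat.factorial (n + 1) : ℝ) := by
    filter_upwards [hmem] with x hx
    have hxp : (0:ℝ) < x ^ (n + 1) := pow_pos hx.1 _
    rw [div_le_div_iff₀ hxp hfacpos]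
    have := (hb x ⟨hx.1.le, hx.2.le⟩).2.1
    calc (1 - P n x) * (Nat.factorial (n + 1) : ℝ)
        ≤ x ^ (n + 1) / (Nat.factorial (n + 1) : ℝ) * (Nat.factorial (n + 1) : ℝ) := by
          exact mul_le_mul_of_nonneg_right this hfacpos.le
    _ = 1 * x ^ (n + 1) := by field_simp
  have hlim : Filter.Tendsto (fun x : ℝ => (1 - ((n:ℝ) + 1) * x) / (Nat.factorial (n + 1) : ℝ))
      (nhdsWithin (0:ℝ) (Set.Ioi 0)) (nhds (1 / (Nat.factorial (n + 1) : ℝ))) := by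
    have hcont : Continuous fun x : ℝ => (1 - ((n:ℝ) + 1) * x) / (Nat.factorial (n + 1) : ℝ) := by
      fun_prop
    have := hcont.tendsto 0
    simp only [mul_zero, sub_zero] at this
    exact this.mono_left nhdsWithin_le_nhds
  exact tendsto_of_tendsto_of_tendsto_of_le_of_le' hlim tendsto_const_nhds hlow hup
end

section
/- Let (P_n) be defined by P_0(x) = exp(-x) and P_{n+1}(x) = exp(-x + ∫_0^x P_n(y) dy) for x ≥ 0. Then for every n ≥ 1, as x → 0⁺ one has P_n(x) = 1 − x^{n+1}/(n+1)! + x^{n+2}/(n+2)! + 2·x^{n+3}/(n+3)! + o(x^{n+3}). -/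
open Real Filter Asymptotics Set MeasureTheory
local notation "L" => nhdsWithin (0:ℝ) (Set.Ioi 0)


private lemma L_mem : ∀ᶠ x : ℝ in L, 0 < x ∧ x < 1 := by
  filter_upwards [Ioo_mem_nhdsGT_of_mem (show (0:ℝ) ∈ Ico (0:ℝ) 1 by norm_num)] with x hx
  exact ⟨hx.1, hx.2⟩

private lemma pow_O {j k : ℕ} (h : k ≤ j) : (fun x:ℝ => x ^ j) =O[L] fun x => x ^ k := by
  apply IsBigO.of_bound 1
  filter_upwards [L_mem] with x hx
  rw [one_mul, Real.norm_eq_abs, Real.norm_eq_abs, abs_of_pos (pow_pos hx.1 j),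
    abs_of_pos (pow_pos hx.1 k)]
  exact pow_le_pow_of_le_one hx.1.le hx.2.le h

private lemma pow_o {j k : ℕ} (h : k < j) : (fun x:ℝ => x ^ j) =o[L] fun x => x ^ k := by
  have h1 : (fun x:ℝ => x ^ (j - k)) =o[L] (fun _ => (1:ℝ)) := by
    rw [isLittleO_one_iff]
    apply tendsto_nhdsWithin_of_tendsto_nhds
    have := (continuous_pow (j-k)).tendsto (0:ℝ)
    simpa [zero_pow (Nat.sub_ne_zero_of_lt h)] using this
  have h2 := (isBigO_refl (fun x:ℝ => x ^ k) L).mul_isLittleO h1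
  simp only [mul_one] at h2
  refine h2.congr_left fun x => ?_
  rw [← pow_add]
  congr 1
  omega

private lemma mono_O (c : ℝ) {j k : ℕ} (h : k ≤ j) :
    (fun x:ℝ => c * x ^ j) =O[L] fun x => x ^ k :=
  ((pow_O h).const_mul_left c)

private lemma integ_o {f : ℝ → ℝ} {k : ℕ} (h : f =o[L] fun x => x ^ k) :
    (fun x => ∫ y in (0:ℝ)..x, f y) =o[L] fun x => x ^ (k+1) := by
  rw [isLittleO_iff]
  intro c hc
  have h' := isLittleO_iff.mp h hc
  rw [eventually_iff, mem_nhdsGT_iff_exists_Ioo_subset] at h'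
  obtain ⟨u, hu, hsub⟩ := h'
  have hm : Ioo (0:ℝ) (min u 1) ∈ L :=
    Ioo_mem_nhdsGT_of_mem ⟨le_refl 0, lt_min (mem_Ioi.mp hu) zero_lt_one⟩
  filter_upwards [hm] with x hx
  have hx0 : 0 < x := hx.1
  have hb : ∀ y ∈ Set.uIoc (0:ℝ) x, ‖f y‖ ≤ c * x ^ k := by
    intro y hy
    rw [Set.uIoc_of_le hx0.le] at hy
    have hyu : y ∈ Ioo (0:ℝ) u :=
      ⟨hy.1, lt_of_le_of_lt hy.2 (lt_of_lt_of_le hx.2 (min_le_left _ _))⟩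
    have hb1 := hsub hyu
    simp only [mem_setOf_eq, Real.norm_eq_abs] at hb1 ⊢
    calc |f y| ≤ c * |y ^ k| := hb1
      _ ≤ c * x ^ k := by
          rw [abs_of_pos (pow_pos hy.1 k)]
          exact mul_le_mul_of_nonneg_left (pow_le_pow_left₀ hy.1.le hy.2 k) hc.le
  have hI := intervalIntegral.norm_integral_le_of_norm_le_const hb
  rw [sub_zero, abs_of_pos hx0] at hI
  rw [Real.norm_eq_abs, Real.norm_eq_abs, abs_of_pos (pow_pos hx0 (k+1))]
  calc |∫ y in (0:ℝ)..x, f y| ≤ c * x ^ k * x := hI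
    _ = c * x ^ (k+1) := by ring


private lemma abs_small {u : ℝ → ℝ} (hu : Tendsto u L (nhds 0)) :
    ∀ᶠ x in L, |u x| ≤ 1 := by
  have h1 : ∀ᶠ t in nhds (0:ℝ), |t| ≤ 1 := by
    filter_upwards [Metric.ball_mem_nhds (0:ℝ) one_pos] with t ht
    rw [Metric.mem_ball, Real.dist_eq, sub_zero] at ht
    exact ht.le
  exact hu.eventually h1

private lemma exp_rem1 {u : ℝ → ℝ} (hu : Tendsto u L (nhds 0)) :
    (fun x => Real.exp (u x) - 1 - u x) =O[L] fun x => u x * u x := by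
  apply IsBigO.of_bound 1
  filter_upwards [abs_small hu] with x hx
  rw [one_mul, Real.norm_eq_abs, Real.norm_eq_abs, abs_mul_self]
  calc |Real.exp (u x) - 1 - u x| ≤ (u x) ^ 2 := Real.abs_exp_sub_one_sub_id_le hx
    _ = u x * u x := pow_two (u x)

private lemma exp_rem2 {u : ℝ → ℝ} (hu : Tendsto u L (nhds 0)) :
    (fun x => Real.exp (u x) - 1 - u x - (u x) ^ 2 / 2) =O[L] fun x => (u x) ^ 3 := by
  apply IsBigO.of_bound 1
  filter_upwards [abs_small hu] with x hx
  have hb := Real.exp_bound (x := u x) hx (n := 3) (by norm_num)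
  have hs : ∑ m ∈ Finset.range 3, (u x) ^ m / (m.factorial : ℝ)
      = 1 + u x + (u x) ^ 2 / 2 := by
    simp [Finset.sum_range_succ, Nat.factorial]
  rw [hs] at hb
  have hfac : ((Nat.succ 3 : ℕ) : ℝ) / ((Nat.factorial 3 : ℝ) * 3) ≤ 1 := by
    norm_num [Nat.factorial]
  have hb2 : |Real.exp (u x) - (1 + u x + (u x) ^ 2 / 2)| ≤ |u x| ^ 3 :=
    hb.trans (mul_le_of_le_one_right (pow_nonneg (abs_nonneg _) 3) hfac)
  have he : Real.exp (u x) - 1 - u x - (u x) ^ 2 / 2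
      = Real.exp (u x) - (1 + u x + (u x) ^ 2 / 2) := by ring
  rw [one_mul, Real.norm_eq_abs, Real.norm_eq_abs, he, abs_pow]
  exact hb2

private lemma exp_neg_taylor :
    (fun x:ℝ => Real.exp (-x) - (1 - x + x^2/2 - x^3/6 + x^4/24)) =O[L] fun x => x^5 := by
  apply IsBigO.of_bound 1
  have hmem : ∀ᶠ x : ℝ in L, 0 < x ∧ x < 1 := by
    filter_upwards [Ioo_mem_nhdsGT_of_mem (show (0:ℝ) ∈ Ico (0:ℝ) 1 by norm_num)] with x hx
    exact ⟨hx.1, hx.2⟩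
  filter_upwards [hmem] with x hx
  have hax : |(-x)| ≤ 1 := by rw [abs_neg, abs_of_pos hx.1]; exact hx.2.le
  have hb := Real.exp_bound (x := -x) hax (n := 5) (by norm_num)
  have hs : ∑ m ∈ Finset.range 5, (-x) ^ m / (m.factorial : ℝ)
      = 1 - x + x^2/2 - x^3/6 + x^4/24 := by
    simp [Finset.sum_range_succ, Nat.factorial]
    ring
  rw [hs] at hb
  rw [one_mul, Real.norm_eq_abs, Real.norm_eq_abs, abs_of_pos (pow_pos hx.1 5)]
  calc |Real.exp (-x) - (1 - x + x^2/2 - x^3/6 + x^4/24)|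
      ≤ |(-x)| ^ 5 * (6 / (120 * 5)) := hb
    _ ≤ x ^ 5 := by
        rw [abs_neg, abs_of_pos hx.1]
        nlinarith [pow_pos hx.1 5]

private lemma Qint (a : ℕ) (x : ℝ) :
    (∫ y in (0:ℝ)..x, (1 - y^(a+1)/(Nat.factorial (a+1) : ℝ)
        + y^(a+2)/(Nat.factorial (a+2) : ℝ) + 2*y^(a+3)/(Nat.factorial (a+3) : ℝ)))
    = x - x^(a+2)/(Nat.factorial (a+2) : ℝ) + x^(a+3)/(Nat.factorial (a+3) : ℝ)
        + 2*x^(a+4)/(Nat.factorial (a+4) : ℝ) := by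
  have i1 : IntervalIntegrable (fun y:ℝ => 1 - y^(a+1)/(Nat.factorial (a+1) : ℝ)) volume 0 x :=
    (by continuity : Continuous fun y:ℝ => 1 - y^(a+1)/(Nat.factorial (a+1) : ℝ)).intervalIntegrable _ _
  have i2 : IntervalIntegrable (fun y:ℝ => y^(a+2)/(Nat.factorial (a+2) : ℝ)) volume 0 x :=
    (by continuity : Continuous fun y:ℝ => y^(a+2)/(Nat.factorial (a+2) : ℝ)).intervalIntegrable _ _
  have i3 : IntervalIntegrable (fun y:ℝ => 2*y^(a+3)/(Nat.factorial (a+3) : ℝ)) volume 0 x :=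
    (by continuity : Continuous fun y:ℝ => 2*y^(a+3)/(Nat.factorial (a+3) : ℝ)).intervalIntegrable _ _
  have ic : IntervalIntegrable (fun _:ℝ => (1:ℝ)) volume 0 x :=
    intervalIntegrable_const
  have i0 : IntervalIntegrable (fun y:ℝ => y^(a+1)/(Nat.factorial (a+1) : ℝ)) volume 0 x :=
    (by continuity : Continuous fun y:ℝ => y^(a+1)/(Nat.factorial (a+1) : ℝ)).intervalIntegrable _ _
  rw [intervalIntegral.integral_add (i1.add i2) i3, intervalIntegral.integral_add i1 i2,
    intervalIntegral.integral_sub ic i0]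
  have hp : ∀ k : ℕ, (∫ y in (0:ℝ)..x, y ^ k / (Nat.factorial k : ℝ))
      = x ^ (k+1) / ((k:ℝ)+1) / (Nat.factorial k : ℝ) := by
    intro k
    rw [intervalIntegral.integral_div, integral_pow]
    simp
  have hp1 := hp (a+1); have hp2 := hp (a+2); have hp3 := hp (a+3)
  have h2 : (∫ y in (0:ℝ)..x, 2 * y^(a+3) / (Nat.factorial (a+3) : ℝ))
      = 2 * (x ^ (a+4) / ((a:ℝ)+3+1) / (Nat.factorial (a+3) : ℝ)) := by
    have : (fun y:ℝ => 2 * y^(a+3) / (Nat.factorial (a+3) : ℝ))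
        = fun y:ℝ => 2 * (y^(a+3) / (Nat.factorial (a+3) : ℝ)) := by funext y; ring
    rw [this, intervalIntegral.integral_const_mul, hp3]
    push_cast; ring_nf
  rw [hp1, hp2, h2, intervalIntegral.integral_const]
  rw [smul_eq_mul]
  have f2 : (Nat.factorial (a+2) : ℝ) = ((a:ℝ)+2) * (Nat.factorial (a+1) : ℝ) := by
    rw [show a+2 = (a+1)+1 from rfl, Nat.factorial_succ]; push_cast; ring
  have f3 : (Nat.factorial (a+3) : ℝ) = ((a:ℝ)+3) * (Nat.factorial (a+2) : ℝ) := by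
    rw [show a+3 = (a+2)+1 from rfl, Nat.factorial_succ]; push_cast; ring
  have f4 : (Nat.factorial (a+4) : ℝ) = ((a:ℝ)+4) * (Nat.factorial (a+3) : ℝ) := by
    rw [show a+4 = (a+3)+1 from rfl, Nat.factorial_succ]; push_cast; ring
  have n1 : (Nat.factorial (a+1) : ℝ) ≠ 0 := Nat.cast_ne_zero.mpr (Nat.factorial_pos _).ne'
  have n2 : (Nat.factorial (a+2) : ℝ) ≠ 0 := Nat.cast_ne_zero.mpr (Nat.factorial_pos _).ne'
  have n3 : (Nat.factorial (a+3) : ℝ) ≠ 0 := Nat.cast_ne_zero.mpr (Nat.factorial_pos _).ne'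
  have c1 : ((a:ℝ)+1+1) ≠ 0 := by positivity
  have c2 : ((a:ℝ)+2+1) ≠ 0 := by positivity
  have c3 : ((a:ℝ)+3+1) ≠ 0 := by positivity
  rw [f4, f3, f2]
  push_cast
  field_simp
  ring
private lemma base_o :
    (fun x : ℝ => Real.exp (-x + (1 - Real.exp (-x))) - (1 - x^2/2 + x^3/6 + x^4/12))
      =o[L] fun x => x ^ 4 := by
  set w : ℝ → ℝ := fun x => -x + (1 - Real.exp (-x)) with hw
  have hv : (fun x => w x - (-(x^2/2) + x^3/6 - x^4/24)) =o[L] fun x => x ^ 4 := by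
    have h1 := exp_neg_taylor.neg_left.trans_isLittleO (pow_o (by norm_num : 4 < 5))
    refine h1.congr_left fun x => ?_
    simp only [hw]
    ring
  have hp1 : (fun x:ℝ => -(x^2/2) + x^3/6 - x^4/24) =O[L] fun x => x ^ 2 := by
    have a1 : (fun x:ℝ => (-(1:ℝ)/2) * x^2) =O[L] fun x => x^2 := mono_O _ le_rfl
    have a2 : (fun x:ℝ => ((1:ℝ)/6) * x^3) =O[L] fun x => x^2 := mono_O _ (by norm_num)
    have a3 : (fun x:ℝ => (-(1:ℝ)/24) * x^4) =O[L] fun x => x^2 := mono_O _ (by norm_num)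
    refine ((a1.add a2).add a3).congr_left fun x => ?_
    ring
  have hOw : w =O[L] fun x => x ^ 2 := by
    have h2 := (hv.isBigO.trans (pow_O (by norm_num : 2 ≤ 4))).add hp1
    refine h2.congr_left fun x => ?_
    ring
  have hx2 : Tendsto (fun x:ℝ => x ^ 2) L (nhds 0) := by
    apply tendsto_nhdsWithin_of_tendsto_nhds
    simpa using (continuous_pow 2).tendsto (0:ℝ)
  have hw0 : Tendsto w L (nhds 0) := hOw.trans_tendsto hx2
  have h6 : (fun x:ℝ => (x^2)^3) =o[L] fun x => x ^ 4 :=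
    (pow_o (by norm_num : 4 < 6)).congr_left fun x => by ring
  have h3 : (fun x => Real.exp (w x) - 1 - w x - (w x)^2/2) =o[L] fun x => x ^ 4 :=
    ((exp_rem2 hw0).trans (hOw.pow 3)).trans_isLittleO h6
  have hv2 : (fun x => w x + x^2/2) =O[L] fun x => x ^ 3 := by
    have b1 : (fun x:ℝ => ((1:ℝ)/6) * x^3) =O[L] fun x => x^3 := mono_O _ le_rfl
    have b2 : (fun x:ℝ => (-(1:ℝ)/24) * x^4) =O[L] fun x => x^3 := mono_O _ (by norm_num)
    have h2 := (hv.isBigO.trans (pow_O (by norm_num : 3 ≤ 4))).add (b1.add b2)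
    refine h2.congr_left fun x => ?_
    ring
  have h33 : (fun x:ℝ => x^3 * x^3) =o[L] fun x => x ^ 4 :=
    (pow_o (by norm_num : 4 < 6)).congr_left fun x => by ring
  have h23 : (fun x:ℝ => x^2 * x^3) =o[L] fun x => x ^ 4 :=
    (pow_o (by norm_num : 4 < 5)).congr_left fun x => by ring
  have hA : (fun x => (w x + x^2/2) * (w x + x^2/2)) =o[L] fun x => x ^ 4 :=
    (hv2.mul hv2).trans_isLittleO h33
  have hB : (fun x => x^2 * (w x + x^2/2)) =o[L] fun x => x ^ 4 :=
    ((isBigO_refl (fun x:ℝ => x^2) L).mul hv2).trans_isLittleO h23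
  have h4 : (fun x => (w x)^2/2 - x^4/8) =o[L] fun x => x ^ 4 := by
    have h5 := (hA.sub hB).const_mul_left ((1:ℝ)/2)
    refine h5.congr_left fun x => ?_
    ring
  have final := (h3.add h4).add hv
  refine final.congr_left fun x => ?_
  ring

theorem cascade_P_four_term_expansion (P : ℕ → ℝ → ℝ)
    (hP0 : ∀ x : ℝ, 0 ≤ x → P 0 x = Real.exp (-x))
    (hPrec : ∀ n : ℕ, ∀ x : ℝ, 0 ≤ x →
      P (n + 1) x = Real.exp (-x + ∫ y in (0:ℝ)..x, P n y)) :
    ∀ n : ℕ, 1 ≤ n →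
      (fun x : ℝ => P n x -
          (1 - x ^ (n + 1) / (Nat.factorial (n + 1) : ℝ)
             + x ^ (n + 2) / (Nat.factorial (n + 2) : ℝ)
             + 2 * x ^ (n + 3) / (Nat.factorial (n + 3) : ℝ)))
        =o[nhdsWithin 0 (Set.Ioi 0)] (fun x : ℝ => x ^ (n + 3)) := by
  have hcont : ∀ n, ContinuousOn (P n) (Icc (0:ℝ) 1) := by
    intro n
    induction n with
    | zero =>
      have h := (Real.continuous_exp.comp continuous_neg).continuousOn (s := Icc (0:ℝ) 1)
      exact h.congr fun x hx => hP0 x hx.1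
    | succ n ih =>
      have hInt : IntegrableOn (P n) (Icc (0:ℝ) 1) := ih.integrableOn_Icc
      have hprim : ContinuousOn (fun x => ∫ y in (0:ℝ)..x, P n y) (Icc (0:ℝ) 1) := by
        have h := intervalIntegral.continuousOn_primitive_interval (μ := volume)
          (a := (0:ℝ)) (b := 1) (f := P n) (by rw [uIcc_of_le (zero_le_one)]; exact hInt)
        rwa [uIcc_of_le (zero_le_one : (0:ℝ) ≤ 1)] at h
      have hc : ContinuousOn (fun x => Real.exp (-x + ∫ y in (0:ℝ)..x, P n y)) (Icc (0:ℝ) 1) :=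
        Real.continuous_exp.comp_continuousOn (continuous_neg.continuousOn.add hprim)
      exact hc.congr fun x hx => hPrec n x hx.1
  have hii : ∀ (n:ℕ) (x:ℝ), x ∈ Ioo (0:ℝ) 1 → IntervalIntegrable (P n) volume 0 x := by
    intro n x hx
    apply ContinuousOn.intervalIntegrable
    rw [uIcc_of_le hx.1.le]
    exact (hcont n).mono (Icc_subset_Icc le_rfl hx.2.le)
  intro n hn
  induction n, hn using Nat.le_induction with
  | base =>
    have heq : ∀ᶠ x in L, P 1 x = Real.exp (-x + (1 - Real.exp (-x))) := by
      filter_upwards [L_mem] with x hx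
      rw [hPrec 0 x hx.1.le]
      congr 1
      have hcg : (∫ y in (0:ℝ)..x, P 0 y) = ∫ y in (0:ℝ)..x, Real.exp (-y) := by
        apply intervalIntegral.integral_congr
        intro y hy
        rw [uIcc_of_le hx.1.le] at hy
        exact hP0 y hy.1
      rw [hcg]
      simp [intervalIntegral.integral_comp_neg (fun y => Real.exp y), integral_exp]
    have hfe : (fun x : ℝ => Real.exp (-x + (1 - Real.exp (-x))) - (1 - x^2/2 + x^3/6 + x^4/12))
        =ᶠ[L] (fun x : ℝ => P 1 x -
          (1 - x ^ (1 + 1) / (Nat.factorial (1 + 1) : ℝ)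
             + x ^ (1 + 2) / (Nat.factorial (1 + 2) : ℝ)
             + 2 * x ^ (1 + 3) / (Nat.factorial (1 + 3) : ℝ))) := by
      filter_upwards [heq] with x hx
      rw [hx]
      norm_num [Nat.factorial]
      ring
    have hge : (fun x : ℝ => x ^ 4) =ᶠ[L] (fun x : ℝ => x ^ (1 + 3)) :=
      Filter.Eventually.of_forall fun x => by norm_num
    exact base_o.congr' hfe hge
  | succ n hn ih =>
    have hI : (fun x => ∫ y in (0:ℝ)..x, (P n y -
        (1 - y ^ (n + 1) / (Nat.factorial (n + 1) : ℝ)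
           + y ^ (n + 2) / (Nat.factorial (n + 2) : ℝ)
           + 2 * y ^ (n + 3) / (Nat.factorial (n + 3) : ℝ))))
        =o[L] fun x => x ^ (n + 4) := by
      have h := integ_o ih
      have e : n + 3 + 1 = n + 4 := by omega
      rwa [e] at h
    have hsplit : (fun x => (∫ y in (0:ℝ)..x, P n y) -
        (x - x ^ (n + 2) / (Nat.factorial (n + 2) : ℝ)
           + x ^ (n + 3) / (Nat.factorial (n + 3) : ℝ)
           + 2 * x ^ (n + 4) / (Nat.factorial (n + 4) : ℝ)))
        =ᶠ[L] (fun x => ∫ y in (0:ℝ)..x, (P n y -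
        (1 - y ^ (n + 1) / (Nat.factorial (n + 1) : ℝ)
           + y ^ (n + 2) / (Nat.factorial (n + 2) : ℝ)
           + 2 * y ^ (n + 3) / (Nat.factorial (n + 3) : ℝ)))) := by
      filter_upwards [L_mem] with x hx
      have hq : IntervalIntegrable (fun y : ℝ =>
          (1 - y ^ (n + 1) / (Nat.factorial (n + 1) : ℝ)
           + y ^ (n + 2) / (Nat.factorial (n + 2) : ℝ)
           + 2 * y ^ (n + 3) / (Nat.factorial (n + 3) : ℝ))) volume 0 x :=
        (by continuity : Continuous fun y : ℝ =>
          (1 - y ^ (n + 1) / (Nat.factorial (n + 1) : ℝ)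
           + y ^ (n + 2) / (Nat.factorial (n + 2) : ℝ)
           + 2 * y ^ (n + 3) / (Nat.factorial (n + 3) : ℝ))).intervalIntegrable _ _
      rw [intervalIntegral.integral_sub (hii n x hx) hq, Qint n x]
    have hI' := hI.congr' hsplit.symm EventuallyEq.rfl
    have hup : (fun x => (-x + ∫ y in (0:ℝ)..x, P n y) -
        (-(x ^ (n + 2) / (Nat.factorial (n + 2) : ℝ))
           + x ^ (n + 3) / (Nat.factorial (n + 3) : ℝ)
           + 2 * x ^ (n + 4) / (Nat.factorial (n + 4) : ℝ)))
        =o[L] fun x => x ^ (n + 4) := by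
      refine hI'.congr_left fun x => ?_
      ring
    have a1 : (fun x:ℝ => (-(1:ℝ)/(Nat.factorial (n + 2) : ℝ)) * x ^ (n+2)) =O[L]
        fun x => x ^ (n+2) := mono_O _ le_rfl
    have a2 : (fun x:ℝ => ((1:ℝ)/(Nat.factorial (n + 3) : ℝ)) * x ^ (n+3)) =O[L]
        fun x => x ^ (n+2) := mono_O _ (by omega)
    have a3 : (fun x:ℝ => ((2:ℝ)/(Nat.factorial (n + 4) : ℝ)) * x ^ (n+4)) =O[L]
        fun x => x ^ (n+2) := mono_O _ (by omega)
    have hOp : (fun x:ℝ => -(x ^ (n + 2) / (Nat.factorial (n + 2) : ℝ))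
           + x ^ (n + 3) / (Nat.factorial (n + 3) : ℝ)
           + 2 * x ^ (n + 4) / (Nat.factorial (n + 4) : ℝ)) =O[L] fun x => x ^ (n+2) := by
      refine ((a1.add a2).add a3).congr_left fun x => ?_
      ring
    have hOu : (fun x => -x + ∫ y in (0:ℝ)..x, P n y) =O[L] fun x => x ^ (n+2) := by
      have h2 := (hup.isBigO.trans (pow_O (by omega : n+2 ≤ n+4))).add hOp
      refine h2.congr_left fun x => ?_
      ring
    have htp : Tendsto (fun x:ℝ => x ^ (n+2)) L (nhds 0) := by
      apply tendsto_nhdsWithin_of_tendsto_nhds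
      have := (continuous_pow (n+2)).tendsto (0:ℝ)
      simpa [zero_pow (by omega : n+2 ≠ 0)] using this
    have hu0 : Tendsto (fun x => -x + ∫ y in (0:ℝ)..x, P n y) L (nhds 0) :=
      hOu.trans_tendsto htp
    have h2n : (fun x:ℝ => x ^ (n+2) * x ^ (n+2)) =o[L] fun x => x ^ (n+4) :=
      (pow_o (by omega : n+4 < (n+2)+(n+2))).congr_left fun x => pow_add x _ _
    have hrem : (fun x => Real.exp (-x + ∫ y in (0:ℝ)..x, P n y) - 1 -
        (-x + ∫ y in (0:ℝ)..x, P n y)) =o[L] fun x => x ^ (n+4) :=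
      ((exp_rem1 hu0).trans (hOu.mul hOu)).trans_isLittleO h2n
    have combined := hrem.add hup
    have hfe : (fun x => (Real.exp (-x + ∫ y in (0:ℝ)..x, P n y) - 1 -
        (-x + ∫ y in (0:ℝ)..x, P n y)) +
        ((-x + ∫ y in (0:ℝ)..x, P n y) -
        (-(x ^ (n + 2) / (Nat.factorial (n + 2) : ℝ))
           + x ^ (n + 3) / (Nat.factorial (n + 3) : ℝ)
           + 2 * x ^ (n + 4) / (Nat.factorial (n + 4) : ℝ))))
        =ᶠ[L] (fun x : ℝ => P (n+1) x -
          (1 - x ^ (n + 1 + 1) / (Nat.factorial (n + 1 + 1) : ℝ)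
             + x ^ (n + 1 + 2) / (Nat.factorial (n + 1 + 2) : ℝ)
             + 2 * x ^ (n + 1 + 3) / (Nat.factorial (n + 1 + 3) : ℝ))) := by
      filter_upwards [L_mem] with x hx
      rw [hPrec n x hx.1.le]
      simp only [show n+1+1 = n+2 from by omega, show n+1+2 = n+3 from by omega,
        show n+1+3 = n+4 from by omega]
      ring
    have hge : (fun x : ℝ => x ^ (n+4)) =ᶠ[L] (fun x : ℝ => x ^ (n+1+3)) :=
      Filter.Eventually.of_forall fun x => by rw [show n+1+3 = n+4 from by omega]
    exact combined.congr' hfe hge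
end

section
/- For a real number v > 0, there exists a real number a > 0 satisfying the dispersion relation a·exp(−a·v) = 1 if and only if v ≤ 1/e. -/
/-! Since `x * exp (-x) ≤ exp (-1)`, the map `a ↦ a * exp (-a * v)` attains its maximum
`1 / (exp 1 * v)` at `a = 1 / v`, and it vanishes at `0`. So by the intermediate value theorem on
`[0, 1 / v]` it takes the value `1` on `(0, ∞)` exactly when `1 ≤ 1 / (exp 1 * v)`. -/

open Real Set

lemma mul_exp_neg_mul_le (a : ℝ) {v : ℝ} (hv : 0 < v) :
    a * exp (-a * v) ≤ 1 / (exp 1 * v) := by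
  calc a * exp (-a * v) = a * v * exp (-(a * v)) / v := by
        rw [neg_mul, mul_right_comm, mul_div_cancel_right₀ _ hv.ne']
    _ ≤ exp (-1) / v := by gcongr; exact mul_exp_neg_le_exp_neg_one _
    _ = 1 / (exp 1 * v) := by rw [exp_neg, inv_eq_one_div, div_div]

lemma one_div_mul_exp_neg_one_div_mul_eq {v : ℝ} (hv : 0 < v) :
    1 / v * exp (-(1 / v) * v) = 1 / (exp 1 * v) := by
  rw [neg_mul, one_div_mul_cancel hv.ne', exp_neg]
  field_simp

lemma one_le_one_div_exp_one_mul_iff {v : ℝ} (hv : 0 < v) :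
    1 ≤ 1 / (exp 1 * v) ↔ v ≤ 1 / exp 1 := by
  rw [le_div_iff₀ (by positivity), le_div_iff₀ (exp_pos 1), one_mul, mul_comm]

theorem dispersion_relation_solvable_iff (v : ℝ) (hv : 0 < v) :
    (∃ a : ℝ, 0 < a ∧ a * Real.exp (-a * v) = 1) ↔ v ≤ 1 / Real.exp 1 := by
  rw [← one_le_one_div_exp_one_mul_iff hv]
  constructor
  · rintro ⟨a, -, ha⟩
    exact ha ▸ mul_exp_neg_mul_le a hv
  · intro hle
    have hcont : ContinuousOn (fun a => a * exp (-a * v)) (Icc 0 (1 / v)) := by fun_prop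
    have hmem : (1 : ℝ) ∈ Ioc (0 * exp (-0 * v)) (1 / v * exp (-(1 / v) * v)) := by
      rw [one_div_mul_exp_neg_one_div_mul_eq hv, zero_mul]
      exact ⟨one_pos, hle⟩
    obtain ⟨a, ha, hfa⟩ := intermediate_value_Ioc (by positivity) hcont hmem
    exact ⟨a, ha.1, hfa⟩
end

section
/- Let v > 0, a > 0 and D > 0, and let Φ : ℝ → ℝ be given by Φ(ξ) = D·exp(a·ξ). Then Φ satisfies the linearized traveling-wave equation Φ(ξ − v) = ∫_{−∞}^{ξ} Φ(η) dη for all ξ ∈ ℝ if and only if a·exp(−a·v) = 1. -/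
open MeasureTheory Real Set

theorem exponential_ansatz_iff_dispersion_general (v a D : ℝ) (ha : 0 < a)
    (hD : 0 < D) :
    (∀ ξ : ℝ, D * Real.exp (a * (ξ - v)) = ∫ η in Set.Iic ξ, D * Real.exp (a * η)) ↔
      a * Real.exp (-a * v) = 1 := by
  have hpointwise (ξ : ℝ) :
      D * exp (a * (ξ - v)) = ∫ η in Iic ξ, D * exp (a * η) ↔ a * exp (-a * v) = 1 := by
    have hshift : exp (a * (ξ - v)) = exp (-a * v) * exp (a * ξ) := by
      rw [← exp_add]; ring_nf
    rw [integral_const_mul, integral_exp_mul_Iic ha, hshift, mul_right_inj' hD.ne',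
      eq_div_iff ha.ne', mul_right_comm, mul_eq_right₀ (exp_ne_zero _), mul_comm]
  simp only [hpointwise, forall_const]

theorem exponential_ansatz_iff_dispersion (v a D : ℝ) (hv : 0 < v) (ha : 0 < a)
    (hD : 0 < D) :
    (∀ ξ : ℝ, D * Real.exp (a * (ξ - v)) = ∫ η in Set.Iic ξ, D * Real.exp (a * η)) ↔
      a * Real.exp (-a * v) = 1 :=
  exponential_ansatz_iff_dispersion_general v a D ha hD
end

section
/- Let v ∈ ℝ, L ∈ ℝ, and let Π : ℝ → ℝ be a nonnegative measurable function integrable on [0, ∞) with R = ∫_0^∞ Π(η) dη, satisfying Π(ξ − v) = exp(−ξ − L + ∫_0^ξ Π(η) dη) for all ξ ∈ ℝ. Then lim_{ξ → ∞} e^{ξ} · Π(ξ) = exp(R − L − v). -/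
theorem front_asymptotics_ahead (v L : ℝ) (Prof : ℝ → ℝ)
    (hmeas : Measurable Prof) (hnonneg : ∀ ξ : ℝ, 0 ≤ Prof ξ)
    (hint : MeasureTheory.IntegrableOn Prof (Set.Ici 0))
    (R : ℝ) (hR : R = ∫ η in Set.Ici (0:ℝ), Prof η)
    (heq : ∀ ξ : ℝ, Prof (ξ - v) = Real.exp (-ξ - L + ∫ η in (0:ℝ)..ξ, Prof η)) :
    Filter.Tendsto (fun ξ : ℝ => Real.exp ξ * Prof ξ) Filter.atTop
      (nhds (Real.exp (R - L - v))) := by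
  have hIoi : MeasureTheory.IntegrableOn Prof (Set.Ioi 0) :=
    hint.mono_set Set.Ioi_subset_Ici_self
  have hRIoi : R = ∫ η in Set.Ioi (0:ℝ), Prof η := by
    rw [hR, MeasureTheory.integral_Ici_eq_integral_Ioi]
  have h1 : Filter.Tendsto (fun x : ℝ => ∫ η in (0:ℝ)..x, Prof η) Filter.atTop (nhds R) := by
    rw [hRIoi]
    exact MeasureTheory.intervalIntegral_tendsto_integral_Ioi 0 hIoi Filter.tendsto_id
  have h2 : Filter.Tendsto (fun ξ : ℝ => ∫ η in (0:ℝ)..(ξ + v), Prof η) Filter.atTop (nhds R) :=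
    h1.comp (Filter.tendsto_atTop_add_const_right _ v Filter.tendsto_id)
  have h3 : Filter.Tendsto (fun ξ : ℝ => Real.exp ((∫ η in (0:ℝ)..(ξ + v), Prof η) - L - v))
      Filter.atTop (nhds (Real.exp (R - L - v))) := by
    exact (Real.continuous_exp.tendsto _).comp
      (Filter.Tendsto.sub_const (Filter.Tendsto.sub_const h2 L) v)
  refine h3.congr (fun ξ => ?_)
  have := heq (ξ + v)
  simp only [add_sub_cancel_right] at this
  rw [this, ← Real.exp_add]
  ring_nf
end
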